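/- arXiv:2410.12495 — 3 statements merged into one kernel-verified Lean document; each statement's English description precedes it below -/
import Mathlib

section
/- For all 0 ≤ t ≤ s ≤ T, one has (2/α)·e^{−(2/α)·(A(s) − A(t))}·y(s) = f₁(t,s,T), i.e. (2/α)·e^{−(2/α)·(A(s)−A(t))}·y(s) = ω·(e^{−ω(s−t)} − u·e^{−ω(2T−s−t)})/(1 + u·e^{−2ω(T−t)}). -/
/-!
With `D(r) = 1 + u·e^{−2ω(T−r)}` and `√(αβ) = αω`, one has `y = (α/2)·ω·(1 − u·e^{−2ω(T−r)})/D(r)`,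
whose antiderivative is `(α/2)·(ω r − log D(r))` since `D' = 2ωu·e^{−2ω(T−r)}`. Hence
`e^{−(2/α)(A(s) − A(t))} = e^{−ω(s−t)}·D(s)/D(t)`, and multiplying by `(2/α)·y(s)` cancels `D(s)`.
Everything is well defined because `|u| < 1` keeps `D` positive on `(−∞, T]`.
-/

open Real Set

lemma abs_sub_div_add_lt_one {K : Type*} [Field K] [LinearOrder K] [IsStrictOrderedRing K]
    {a b : K} (ha : 0 < a) (hb : 0 < b) : |(a - b) / (a + b)| < 1 := by
  rw [abs_div, abs_of_pos (add_pos ha hb), div_lt_one (add_pos ha hb), abs_sub_lt_iff]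
  constructor <;> linarith

lemma Real.sqrt_mul_eq_mul_sqrt_div {a : ℝ} (b : ℝ) (ha : 0 < a) : √(a * b) = a * √(b / a) := by
  rw [← sqrt_sq ha.le, ← sqrt_mul (sq_nonneg a), sqrt_sq ha.le]
  congr 1
  field_simp

noncomputable def riccatiDen (ω u T r : ℝ) : ℝ := 1 + u * exp (-2 * ω * (T - r))

noncomputable def riccatiPrimitive (ω u T r : ℝ) : ℝ := ω * r - log (riccatiDen ω u T r)

section

variable {ω u T : ℝ}

lemma riccatiDen_pos (hω : 0 ≤ ω) (hu : |u| < 1) {r : ℝ} (hr : r ≤ T) :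
    0 < riccatiDen ω u T r := by
  have hE : exp (-2 * ω * (T - r)) ≤ 1 := exp_le_one_iff.mpr (by nlinarith)
  unfold riccatiDen
  nlinarith [neg_abs_le u, abs_nonneg u, exp_pos (-2 * ω * (T - r))]

lemma hasDerivAt_riccatiDen (r : ℝ) :
    HasDerivAt (riccatiDen ω u T) (2 * ω * (u * exp (-2 * ω * (T - r)))) r := by
  have hlin : HasDerivAt (fun x : ℝ => -2 * ω * (T - x)) (2 * ω) r := by
    simpa using ((hasDerivAt_id r).const_sub T).const_mul (-2 * ω)
  exact ((hlin.exp.const_mul u).const_add 1).congr_deriv (by ring)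

lemma hasDerivAt_riccatiPrimitive {r : ℝ} (hr : riccatiDen ω u T r ≠ 0) :
    HasDerivAt (riccatiPrimitive ω u T)
      (ω * (1 - u * exp (-2 * ω * (T - r))) / riccatiDen ω u T r) r := by
  have hlin : HasDerivAt (fun x : ℝ => ω * x) ω r := by
    simpa using (hasDerivAt_id r).const_mul ω
  refine (hlin.sub ((hasDerivAt_riccatiDen r).log hr)).congr_deriv ?_
  unfold riccatiDen at hr ⊢
  generalize exp (-2 * ω * (T - r)) = E at hr ⊢
  field_simp
  ring

lemma integral_eq_riccatiPrimitive_sub (hω : 0 ≤ ω) (hu : |u| < 1) {a b : ℝ} (hab : a ≤ b)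
    (hb : b ≤ T) :
    ∫ r in a..b, ω * (1 - u * exp (-2 * ω * (T - r))) / riccatiDen ω u T r =
      riccatiPrimitive ω u T b - riccatiPrimitive ω u T a := by
  have hpos : ∀ r ∈ uIcc a b, 0 < riccatiDen ω u T r := fun r hr =>
    riccatiDen_pos hω hu (((uIcc_of_le hab ▸ hr).2).trans hb)
  refine intervalIntegral.integral_eq_sub_of_hasDerivAt
    (fun r hr => hasDerivAt_riccatiPrimitive (hpos r hr).ne') (ContinuousOn.intervalIntegrable ?_)
  refine ContinuousOn.div (by fun_prop) ?_ fun r hr => (hpos r hr).ne'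
  unfold riccatiDen
  fun_prop

lemma exp_riccatiPrimitive_sub {t s : ℝ} (ht : 0 < riccatiDen ω u T t)
    (hs : 0 < riccatiDen ω u T s) :
    exp (riccatiPrimitive ω u T t - riccatiPrimitive ω u T s) =
      exp (-ω * (s - t)) * riccatiDen ω u T s / riccatiDen ω u T t := by
  have : riccatiPrimitive ω u T t - riccatiPrimitive ω u T s =
      -ω * (s - t) + log (riccatiDen ω u T s) - log (riccatiDen ω u T t) := by
    unfold riccatiPrimitive
    ring
  rw [this, exp_sub, exp_add, exp_log hs, exp_log ht]

end

theorem stmt_4_general (α β γ T : ℝ) (hα : 0 < α) (hβ : 0 < β) (hγ : 0 < γ)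
    (ω u : ℝ) (hω : ω = Real.sqrt (β / α))
    (hu : u = (Real.sqrt (α * β) - γ) / (Real.sqrt (α * β) + γ))
    (y : ℝ → ℝ)
    (hy : ∀ t, y t = (Real.sqrt (α * β) / 2) *
      (1 - u * Real.exp (-2 * ω * (T - t))) / (1 + u * Real.exp (-2 * ω * (T - t))))
    (A : ℝ → ℝ) (hA : ∀ t, A t = -∫ s in t..T, y s)
    (f₁ : ℝ → ℝ → ℝ)
    (hf₁ : ∀ t s, f₁ t s = ω * (Real.exp (-ω * (s - t)) - u * Real.exp (-ω * (2 * T - s - t))) /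
      (1 + u * Real.exp (-2 * ω * (T - t)))) :
    ∀ t s, 0 ≤ t → t ≤ s → s ≤ T →
      (2 / α) * Real.exp (-(2 / α) * (A s - A t)) * y s = f₁ t s := by
  intro t s _ hts hsT
  have hω0 : 0 ≤ ω := hω ▸ sqrt_nonneg _
  have hu1 : |u| < 1 := hu ▸ abs_sub_div_add_lt_one (sqrt_pos.mpr (mul_pos hα hβ)) hγ
  have hy' : ∀ r, y r = α / 2 * (ω * (1 - u * exp (-2 * ω * (T - r))) / riccatiDen ω u T r) := by
    intro r
    rw [hy, sqrt_mul_eq_mul_sqrt_div β hα, ← hω, riccatiDen]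
    ring
  have hA' : ∀ r ≤ T, A r = α / 2 * (riccatiPrimitive ω u T r - riccatiPrimitive ω u T T) := by
    intro r hr
    simp only [hA, hy', intervalIntegral.integral_const_mul,
      integral_eq_riccatiPrimitive_sub hω0 hu1 hr le_rfl]
    ring
  have hexponent :
      -(2 / α) * (A s - A t) = riccatiPrimitive ω u T t - riccatiPrimitive ω u T s := by
    rw [hA' s hsT, hA' t (hts.trans hsT)]
    field_simp
    ring
  have hexp_split : exp (-ω * (2 * T - s - t)) = exp (-ω * (s - t)) * exp (-2 * ω * (T - s)) := by
    rw [← exp_add]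
    ring_nf
  have hDt := riccatiDen_pos hω0 hu1 (hts.trans hsT)
  have hDs := riccatiDen_pos hω0 hu1 hsT
  rw [hexponent, exp_riccatiPrimitive_sub hDt hDs, hy', hf₁, hexp_split, ← riccatiDen]
  field_simp

/-- For all `0 ≤ t ≤ s ≤ T`, one has `(2/α)·e^{−(2/α)(A(s) − A(t))}·y(s) = f₁(t,s,T)`. -/
theorem stmt_4 (α β γ T : ℝ) (hα : 0 < α) (hβ : 0 < β) (hγ : 0 < γ) (hT : 0 < T)
    (ω u : ℝ) (hω : ω = Real.sqrt (β / α))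
    (hu : u = (Real.sqrt (α * β) - γ) / (Real.sqrt (α * β) + γ))
    (y : ℝ → ℝ)
    (hy : ∀ t, y t = (Real.sqrt (α * β) / 2) *
      (1 - u * Real.exp (-2 * ω * (T - t))) / (1 + u * Real.exp (-2 * ω * (T - t))))
    (A : ℝ → ℝ) (hA : ∀ t, A t = -∫ s in t..T, y s)
    (f₁ : ℝ → ℝ → ℝ)
    (hf₁ : ∀ t s, f₁ t s = ω * (Real.exp (-ω * (s - t)) - u * Real.exp (-ω * (2 * T - s - t))) /
      (1 + u * Real.exp (-2 * ω * (T - t)))) :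
    ∀ t s, 0 ≤ t → t ≤ s → s ≤ T →
      (2 / α) * Real.exp (-(2 / α) * (A s - A t)) * y s = f₁ t s :=
  stmt_4_general α β γ T hα hβ hγ ω u hω hu y hy A hA f₁ hf₁
end

section
/- For all t ∈ [0, T], one has e^{(2/α)·A(t)} = e^{−ω(T−t)}·(1 + u)/(1 + u·e^{−2ω(T−t)}). -/
/-!
With `E(s) = exp (-2ω(T - s))`, the integrand `ω (1 - u E) / (1 + u E)` is the derivative of
`-ω (T - s) - log (1 + u E(s))`, and `1 + u E > 0` on `[0, T]` because `u > -1` and `E ≤ 1`.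
Since `y = (α/2) · ω (1 - u E)/(1 + u E)` (as `√(αβ) = αω`), this gives
`(2/α) A(t) = log (1 + u) - ω (T - t) - log (1 + u E(t))`, and exponentiating finishes.
-/

open Real

lemma one_add_mul_exp_pos {u x : ℝ} (hu : -1 < u) (hx : x ≤ 0) : 0 < 1 + u * exp x := by
  have h0 := exp_pos x
  have h1 := exp_le_one_iff.2 hx
  rcases le_or_gt 0 u with h | h <;> nlinarith

lemma hasDerivAt_neg_mul_sub_sub_log_one_add_mul_exp (u ω T s : ℝ)
    (hs : 1 + u * exp (-2 * ω * (T - s)) ≠ 0) :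
    HasDerivAt (fun s => -(ω * (T - s)) - log (1 + u * exp (-2 * ω * (T - s))))
      (ω * (1 - u * exp (-2 * ω * (T - s))) / (1 + u * exp (-2 * ω * (T - s)))) s := by
  have hlin : HasDerivAt (fun s : ℝ => -2 * ω * (T - s)) (2 * ω) s := by
    simpa using ((hasDerivAt_const s T).sub (hasDerivAt_id s)).const_mul (-2 * ω)
  have hden : HasDerivAt (fun s => 1 + u * exp (-2 * ω * (T - s)))
      (u * (exp (-2 * ω * (T - s)) * (2 * ω))) s :=
    (hlin.exp.const_mul u).const_add 1
  have hneg : HasDerivAt (fun s : ℝ => -(ω * (T - s))) ω s := by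
    simpa using (((hasDerivAt_const s T).sub (hasDerivAt_id s)).const_mul ω).fun_neg
  refine (hneg.fun_sub (hden.log hs)).congr_deriv ?_
  generalize exp (-2 * ω * (T - s)) = E at hs ⊢
  field_simp
  ring

lemma integral_mul_one_sub_mul_exp_div_one_add_mul_exp {u ω T t : ℝ} (hu : -1 < u)
    (hω : 0 ≤ ω) (htT : t ≤ T) :
    ∫ s in t..T, ω * (1 - u * exp (-2 * ω * (T - s))) / (1 + u * exp (-2 * ω * (T - s))) =
      ω * (T - t) + log (1 + u * exp (-2 * ω * (T - t))) - log (1 + u) := by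
  have hpos : ∀ s ∈ Set.uIcc t T, 0 < 1 + u * exp (-2 * ω * (T - s)) := by
    intro s hs
    rw [Set.uIcc_of_le htT] at hs
    exact one_add_mul_exp_pos hu (by nlinarith [hs.2])
  rw [intervalIntegral.integral_eq_sub_of_hasDerivAt
    (fun s hs => hasDerivAt_neg_mul_sub_sub_log_one_add_mul_exp u ω T s (hpos s hs).ne')
    (ContinuousOn.intervalIntegrable
      (ContinuousOn.div (by fun_prop) (by fun_prop) fun s hs => (hpos s hs).ne'))]
  simp only [sub_self, mul_zero, exp_zero, mul_one, neg_zero]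
  ring

theorem stmt_5_general (α β γ T : ℝ) (hα : 0 < α) (hβ : 0 < β) (hγ : 0 < γ)
    (ω u : ℝ) (hω : ω = Real.sqrt (β / α))
    (hu : u = (Real.sqrt (α * β) - γ) / (Real.sqrt (α * β) + γ))
    (y : ℝ → ℝ)
    (hy : ∀ t, y t = (Real.sqrt (α * β) / 2) *
      (1 - u * Real.exp (-2 * ω * (T - t))) / (1 + u * Real.exp (-2 * ω * (T - t))))
    (A : ℝ → ℝ) (hA : ∀ t, A t = -∫ s in t..T, y s) :
    ∀ t ∈ Set.Icc (0 : ℝ) T,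
      Real.exp ((2 / α) * A t) =
        Real.exp (-ω * (T - t)) * (1 + u) / (1 + u * Real.exp (-2 * ω * (T - t))) := by
  rintro t ⟨-, htT⟩
  have hsqrt : 0 < sqrt (α * β) := sqrt_pos.2 (by positivity)
  have hω_nonneg : 0 ≤ ω := hω ▸ sqrt_nonneg _
  have hsqrt_eq : sqrt (α * β) = α * ω := by
    rw [hω, show α * β = α ^ 2 * (β / α) by field_simp, sqrt_mul (by positivity),
      sqrt_sq hα.le]
  have hu_gt : -1 < u := by
    rw [hu, lt_div_iff₀ (by positivity)]
    linarith
  have hy_eq : y = fun s => α / 2 *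
      (ω * (1 - u * exp (-2 * ω * (T - s))) / (1 + u * exp (-2 * ω * (T - s)))) := by
    funext s
    rw [hy s, hsqrt_eq]
    ring
  have hexponent : (2 / α) * A t =
      log (1 + u) - ω * (T - t) - log (1 + u * exp (-2 * ω * (T - t))) := by
    rw [hA t, hy_eq, intervalIntegral.integral_const_mul,
      integral_mul_one_sub_mul_exp_div_one_add_mul_exp hu_gt hω_nonneg htT]
    field_simp
    ring
  rw [hexponent, exp_sub, exp_sub, exp_log (by linarith),
    exp_log (one_add_mul_exp_pos hu_gt (by nlinarith)), neg_mul ω, exp_neg]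
  ring

/-- For all `t ∈ [0, T]`, one has
`e^{(2/α)·A(t)} = e^{−ω(T−t)}·(1 + u)/(1 + u·e^{−2ω(T−t)})`. -/
theorem stmt_5 (α β γ T : ℝ) (hα : 0 < α) (hβ : 0 < β) (hγ : 0 < γ) (hT : 0 < T)
    (ω u : ℝ) (hω : ω = Real.sqrt (β / α))
    (hu : u = (Real.sqrt (α * β) - γ) / (Real.sqrt (α * β) + γ))
    (y : ℝ → ℝ)
    (hy : ∀ t, y t = (Real.sqrt (α * β) / 2) *
      (1 - u * Real.exp (-2 * ω * (T - t))) / (1 + u * Real.exp (-2 * ω * (T - t))))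
    (A : ℝ → ℝ) (hA : ∀ t, A t = -∫ s in t..T, y s) :
    ∀ t ∈ Set.Icc (0 : ℝ) T,
      Real.exp ((2 / α) * A t) =
        Real.exp (-ω * (T - t)) * (1 + u) / (1 + u * Real.exp (-2 * ω * (T - t))) :=
  stmt_5_general α β γ T hα hβ hγ ω u hω hu y hy A hA
end

section
/- Let P : [0, T] → ℝ be continuous and define, for t ∈ [0, T], Q(t) = e^{−G(t)}·( ∫_0^t e^{G(s)}·( ∫_s^T f₁(s,r,T)·(P(r)/(2α)) dr ) ds − ∫_0^t e^{G(s)}·(P(s)/(2α)) ds ), where G(t) = ωt − log(1 + u·e^{−2ω(T−t)}). Then Q(0) = 0 and Q is differentiable on [0, T] with Q′(t) = −q(t), where q(t) = ω·f(t,T)·Q(t) − ∫_t^T f₁(t,r,T)·(P(r)/(2α)) dr + P(t)/(2α). -/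
/-!
Write `D(t) = 1 + u e^{-2ω(T-t)}`, which is positive on `[0, T]` because `|u| < 1`. Then
`G = ωt - log D` has derivative `ω f`, and `Q = e^{-G} ∫_0^t e^{G} F` with
`F(s) = ∫_s^T f₁(s,r) P(r)/(2α) dr - P(s)/(2α)` is the variation-of-constants solution of
`Q' = -ω f Q + F`, which is `Q' = -q`. The only analytic point is the continuity of `F`: the kernel
separates as `f₁(s,r) = ω e^{G(s)} (e^{-ωr} - u e^{-ω(2T-r)})`, so the inner integral is a
continuous function of `s` times a primitive of a continuous function.
-/

open Set Real intervalIntegral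

theorem hasDerivWithinAt_integral_of_continuousOn {E : Type*} [NormedAddCommGroup E]
    [NormedSpace ℝ E] [CompleteSpace E] {g : ℝ → E} {a b t : ℝ}
    (hg : ContinuousOn g (Icc a b)) (ht : t ∈ Icc a b) :
    HasDerivWithinAt (fun x => ∫ s in a..x, g s) (g t) (Icc a b) t := by
  have : Fact (t ∈ Icc a b) := ⟨ht⟩
  exact integral_hasDerivWithinAt_right
    ((hg.mono (uIcc_subset_Icc (left_mem_Icc.2 (ht.1.trans ht.2)) ht)).intervalIntegrable)
    (hg.stronglyMeasurableAtFilter_nhdsWithin measurableSet_Icc t) (hg t ht)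

theorem HasDerivWithinAt.exp_neg_mul {G H : ℝ → ℝ} {G' F t : ℝ} {s : Set ℝ}
    (hG : HasDerivWithinAt G G' s t) (hH : HasDerivWithinAt H (Real.exp (G t) * F) s t) :
    HasDerivWithinAt (fun x => Real.exp (-G x) * H x) (-G' * (Real.exp (-G t) * H t) + F) s t := by
  refine (hG.neg.exp.mul hH).congr_deriv ?_
  have hexp : Real.exp (-G t) * Real.exp (G t) = 1 := by
    rw [← Real.exp_add, neg_add_cancel, Real.exp_zero]
  linear_combination F * hexp

theorem abs_sub_div_add_lt_one_s8 {a c : ℝ} (ha : 0 < a) (hc : 0 < c) :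
    |(a - c) / (a + c)| < 1 := by
  rw [abs_div, abs_of_pos (add_pos ha hc), div_lt_one (add_pos ha hc)]
  exact abs_lt.2 ⟨by linarith, by linarith⟩

theorem one_add_mul_exp_pos_s8 {u ω T t : ℝ} (hu : |u| < 1) (hω : 0 ≤ ω) (ht : t ≤ T) :
    0 < 1 + u * exp (-2 * ω * (T - t)) := by
  have hE : exp (-2 * ω * (T - t)) ≤ 1 := exp_le_one_iff.2 (by nlinarith)
  nlinarith [neg_abs_le u, abs_nonneg u, exp_pos (-2 * ω * (T - t))]

theorem hasDerivAt_mul_sub_log_one_add_mul_exp {u ω T t : ℝ}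
    (hD : 1 + u * exp (-2 * ω * (T - t)) ≠ 0) :
    HasDerivAt (fun t => ω * t - log (1 + u * exp (-2 * ω * (T - t))))
      (ω * ((1 - u * exp (-2 * ω * (T - t))) / (1 + u * exp (-2 * ω * (T - t))))) t := by
  have hexp : HasDerivAt (fun t => exp (-2 * ω * (T - t)))
      (exp (-2 * ω * (T - t)) * (2 * ω)) t :=
    (((hasDerivAt_id t).const_sub T).const_mul (-2 * ω)).exp.congr_deriv (by simp)
  have hlog := ((hexp.const_mul u).const_add 1).log hD
  refine (((hasDerivAt_id t).const_mul ω).sub hlog).congr_deriv ?_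
  generalize exp (-2 * ω * (T - t)) = E at hD ⊢
  field_simp
  ring

theorem mul_exp_sub_div_one_add_mul_exp {u ω T s r : ℝ}
    (hD : 0 < 1 + u * exp (-2 * ω * (T - s))) :
    ω * (exp (-ω * (r - s)) - u * exp (-ω * (2 * T - r - s))) /
        (1 + u * exp (-2 * ω * (T - s))) =
      ω * exp (ω * s - log (1 + u * exp (-2 * ω * (T - s)))) *
        (exp (-ω * r) - u * exp (-ω * (2 * T - r))) := by
  rw [exp_sub, exp_log hD, show -ω * (r - s) = ω * s + -ω * r by ring,
    show -ω * (2 * T - r - s) = ω * s + -ω * (2 * T - r) by ring, exp_add, exp_add]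
  field_simp

theorem continuousOn_integral_kernel_mul {u ω T : ℝ} {p : ℝ → ℝ} (hu : |u| < 1) (hω : 0 ≤ ω)
    (hp : ContinuousOn p (Icc 0 T)) :
    ContinuousOn (fun s => ∫ r in s..T, ω * (exp (-ω * (r - s)) - u * exp (-ω * (2 * T - r - s))) /
      (1 + u * exp (-2 * ω * (T - s))) * p r) (Icc 0 T) := by
  intro t ht
  have hT : 0 ≤ T := ht.1.trans ht.2
  set D : ℝ → ℝ := fun s => 1 + u * exp (-2 * ω * (T - s))
  set c : ℝ → ℝ := fun r => (exp (-ω * r) - u * exp (-ω * (2 * T - r))) * p r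
  have hD : ∀ s ∈ Icc 0 T, 0 < D s := fun s hs => one_add_mul_exp_pos_s8 hu hω hs.2
  have hc : ContinuousOn c (Icc 0 T) := by fun_prop (disch := assumption)
  have hprim : ContinuousOn (fun s => ∫ r in s..T, c r) (Icc 0 T) := by
    simpa only [uIcc_of_le hT] using continuousOn_primitive_interval_left
      (μ := MeasureTheory.volume) (hc.integrableOn_Icc.mono_set (uIcc_of_le hT).subset)
  have hexp : ContinuousOn (fun s => exp (ω * s - log (D s))) (Icc 0 T) := by
    fun_prop (disch := exact fun s hs => (hD s hs).ne')
  have hsep : ContinuousOn (fun s => ω * exp (ω * s - log (D s)) * ∫ r in s..T, c r) (Icc 0 T) :=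
    (continuousOn_const.mul hexp).mul hprim
  refine hsep.congr (fun s hs => ?_) t ht
  dsimp only
  rw [← integral_const_mul]
  refine integral_congr fun r _ => ?_
  rw [mul_exp_sub_div_one_add_mul_exp (hD s hs), mul_assoc]

theorem stmt_8_general (α β γ T : ℝ) (hα : 0 < α) (hβ : 0 < β) (hγ : 0 < γ)
    (ω u : ℝ) (hω : ω = Real.sqrt (β / α))
    (hu : u = (Real.sqrt (α * β) - γ) / (Real.sqrt (α * β) + γ))
    (f : ℝ → ℝ)
    (hf : ∀ t, f t = (1 - u * Real.exp (-2 * ω * (T - t))) /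
      (1 + u * Real.exp (-2 * ω * (T - t))))
    (f₁ : ℝ → ℝ → ℝ)
    (hf₁ : ∀ t s, f₁ t s = ω * (Real.exp (-ω * (s - t)) - u * Real.exp (-ω * (2 * T - s - t))) /
      (1 + u * Real.exp (-2 * ω * (T - t))))
    (G : ℝ → ℝ)
    (hG : ∀ t, G t = ω * t - Real.log (1 + u * Real.exp (-2 * ω * (T - t))))
    (P : ℝ → ℝ) (hP : ContinuousOn P (Set.Icc 0 T))
    (Q : ℝ → ℝ)
    (hQ : ∀ t, Q t = Real.exp (-G t) *
      ((∫ s in (0:ℝ)..t, Real.exp (G s) * ∫ r in s..T, f₁ s r * (P r / (2 * α))) -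
        ∫ s in (0:ℝ)..t, Real.exp (G s) * (P s / (2 * α))))
    (q : ℝ → ℝ)
    (hq : ∀ t, q t = ω * f t * Q t - (∫ r in t..T, f₁ t r * (P r / (2 * α))) +
      P t / (2 * α)) :
    Q 0 = 0 ∧
      ∀ t ∈ Set.Icc (0 : ℝ) T, HasDerivWithinAt Q (-q t) (Set.Icc 0 T) t := by
  refine ⟨by simp [hQ], fun t ht => ?_⟩
  have hu1 : |u| < 1 := hu ▸ abs_sub_div_add_lt_one_s8 (sqrt_pos.2 (mul_pos hα hβ)) hγ
  have hω0 : 0 ≤ ω := hω ▸ sqrt_nonneg _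
  have hGder : ∀ s ∈ Icc 0 T, HasDerivWithinAt G (ω * f s) (Icc 0 T) s := fun s hs => by
    rw [funext hG, hf]
    exact (hasDerivAt_mul_sub_log_one_add_mul_exp
      (one_add_mul_exp_pos_s8 hu1 hω0 hs.2).ne').hasDerivWithinAt
  have hexpG : ContinuousOn (fun s => exp (G s)) (Icc 0 T) :=
    continuous_exp.comp_continuousOn fun s hs => (hGder s hs).continuousWithinAt
  have hp : ContinuousOn (fun s => P s / (2 * α)) (Icc 0 T) := hP.div_const _
  have hI : ContinuousOn (fun s => ∫ r in s..T, f₁ s r * (P r / (2 * α))) (Icc 0 T) := by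
    simpa only [hf₁] using continuousOn_integral_kernel_mul hu1 hω0 hp
  have hA := hasDerivWithinAt_integral_of_continuousOn (hexpG.mul hI) ht
  have hB := hasDerivWithinAt_integral_of_continuousOn (hexpG.mul hp) ht
  rw [funext hQ]
  refine ((hGder t ht).exp_neg_mul ((hA.sub hB).congr_deriv (mul_sub _ _ _).symm)).congr_deriv ?_
  simp only [hq, hQ, Pi.mul_apply, Pi.sub_apply]
  ring

/-- Let `P : [0,T] → ℝ` be continuous and
`Q(t) = e^{−G(t)}·(∫_0^t e^{G(s)}·(∫_s^T f₁(s,r,T)·(P(r)/(2α)) dr) ds − ∫_0^t e^{G(s)}·(P(s)/(2α)) ds)`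
with `G(t) = ωt − log(1 + u·e^{−2ω(T−t)})`.  Then `Q(0) = 0` and `Q` is differentiable
on `[0, T]` with `Q′(t) = −q(t)`, where
`q(t) = ω·f(t,T)·Q(t) − ∫_t^T f₁(t,r,T)·(P(r)/(2α)) dr + P(t)/(2α)`. -/
theorem stmt_8 (α β γ T : ℝ) (hα : 0 < α) (hβ : 0 < β) (hγ : 0 < γ) (hT : 0 < T)
    (ω u : ℝ) (hω : ω = Real.sqrt (β / α))
    (hu : u = (Real.sqrt (α * β) - γ) / (Real.sqrt (α * β) + γ))
    (f : ℝ → ℝ)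
    (hf : ∀ t, f t = (1 - u * Real.exp (-2 * ω * (T - t))) /
      (1 + u * Real.exp (-2 * ω * (T - t))))
    (f₁ : ℝ → ℝ → ℝ)
    (hf₁ : ∀ t s, f₁ t s = ω * (Real.exp (-ω * (s - t)) - u * Real.exp (-ω * (2 * T - s - t))) /
      (1 + u * Real.exp (-2 * ω * (T - t))))
    (G : ℝ → ℝ)
    (hG : ∀ t, G t = ω * t - Real.log (1 + u * Real.exp (-2 * ω * (T - t))))
    (P : ℝ → ℝ) (hP : ContinuousOn P (Set.Icc 0 T))
    (Q : ℝ → ℝ)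
    (hQ : ∀ t, Q t = Real.exp (-G t) *
      ((∫ s in (0:ℝ)..t, Real.exp (G s) * ∫ r in s..T, f₁ s r * (P r / (2 * α))) -
        ∫ s in (0:ℝ)..t, Real.exp (G s) * (P s / (2 * α))))
    (q : ℝ → ℝ)
    (hq : ∀ t, q t = ω * f t * Q t - (∫ r in t..T, f₁ t r * (P r / (2 * α))) +
      P t / (2 * α)) :
    Q 0 = 0 ∧
      ∀ t ∈ Set.Icc (0 : ℝ) T, HasDerivWithinAt Q (-q t) (Set.Icc 0 T) t :=
  stmt_8_general α β γ T hα hβ hγ ω u hω hu f hf f₁ hf₁ G hG P hP Q hQ q hq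
end
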